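/- arXiv:1810.08798 — 6 statements merged into one kernel-verified Lean document; each statement's English description precedes it below -/
import Mathlib

section
/- For any square real matrix M of size m and any real number w, det(M + w·U) = det(M) + w·S(co(M)), where U is the m×m all-ones matrix, co(M) is the cofactor matrix of M, and S denotes the sum of all entries of a matrix. -/
/-!
With `w • U = (w • 1) 1ᵀ` this is the matrix determinant lemma
`det (A + u vᵀ) = det A + vᵀ adj(A) u`, as `vᵀ adj(M) u = w · S(adj M) = w · S(co M)`.
When `det A` is a unit the lemma is `det (1 + A⁻¹ u vᵀ) = 1 + vᵀ A⁻¹ u`. Both sides commute with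
ring homomorphisms, so it extends to a regular `det A` by localizing at `det A`, and then to every
`A` by specializing the generic perturbation `X • 1 + A` over `R[X]`, whose determinant is monic,
at `X = 0`.
-/

open Matrix

/-- Cofactor matrix: the transpose of the adjugate. -/
noncomputable def cof {m : ℕ} (M : Matrix (Fin m) (Fin m) ℝ) : Matrix (Fin m) (Fin m) ℝ :=
  (Matrix.adjugate M)ᵀ

/-- Sum of all entries of a matrix. -/
def entrySum {m p : ℕ} (A : Matrix (Fin m) (Fin p) ℝ) : ℝ := ∑ i, ∑ j, A i j

namespace Matrix

open Polynomial

variable {n R S : Type*} [Fintype n] [DecidableEq n] [CommRing R] [CommRing S]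

theorem _root_.RingHom.map_det_add_vecMulVec (f : R →+* S) (A : Matrix n n R) (u v : n → R) :
    f (A + vecMulVec u v).det = (A.map f + vecMulVec (f ∘ u) (f ∘ v)).det := by
  rw [RingHom.map_det]
  congr 1
  ext i j
  simp [vecMulVec_apply]

theorem _root_.RingHom.map_det_add_dotProduct_adjugate_mulVec (f : R →+* S) (A : Matrix n n R)
    (u v : n → R) :
    f (A.det + v ⬝ᵥ A.adjugate *ᵥ u) =
      (A.map f).det + (f ∘ v) ⬝ᵥ (A.map f).adjugate *ᵥ (f ∘ u) := by
  rw [map_add, RingHom.map_det, RingHom.map_dotProduct]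
  congr 2
  ext i
  rw [Function.comp_apply, RingHom.map_mulVec, ← RingHom.mapMatrix_apply, RingHom.map_adjugate]
  rfl

theorem det_add_vecMulVec_of_isUnit {A : Matrix n n R} (hA : IsUnit A.det) (u v : n → R) :
    (A + vecMulVec u v).det = A.det + v ⬝ᵥ A.adjugate *ᵥ u := by
  rw [vecMulVec_eq Unit, det_add_replicateCol_mul_replicateRow hA, det_unique (1 + _), add_apply,
    one_apply_eq, Matrix.mul_assoc, ← replicateCol_mulVec, replicateRow_mul_replicateCol_apply,
    inv_def, smul_mulVec, dotProduct_smul, smul_eq_mul, mul_add, mul_one, ← mul_assoc,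
    Ring.mul_inverse_cancel _ hA, one_mul]

theorem det_add_vecMulVec_of_isRegular {A : Matrix n n R} (hA : IsRegular A.det) (u v : n → R) :
    (A + vecMulVec u v).det = A.det + v ⬝ᵥ A.adjugate *ᵥ u := by
  let f := algebraMap R (Localization.Away A.det)
  have hf : Function.Injective f := IsLocalization.injective _ <|
    Submonoid.powers_le.mpr (isRegular_iff_mem_nonZeroDivisors.mp hA)
  have hdet : IsUnit (A.map f).det := by
    rw [← RingHom.mapMatrix_apply, ← RingHom.map_det]
    exact IsLocalization.Away.algebraMap_isUnit _
  apply hf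
  rw [RingHom.map_det_add_vecMulVec, RingHom.map_det_add_dotProduct_adjugate_mulVec]
  exact det_add_vecMulVec_of_isUnit hdet _ _

theorem det_add_vecMulVec (A : Matrix n n R) (u v : n → R) :
    (A + vecMulVec u v).det = A.det + v ⬝ᵥ A.adjugate *ᵥ u := by
  let A' : Matrix n n R[X] := (X : R[X]) • 1 + A.map C
  have hA' : A'.map (evalRingHom 0) = A := by
    ext i j
    by_cases h : i = j <;> simp [A', h]
  have hreg : IsRegular A'.det := Monic.isRegular (leadingCoeff_det_X_one_add_C A)
  have := congrArg (evalRingHom 0) (det_add_vecMulVec_of_isRegular hreg (C ∘ u) (C ∘ v))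
  rw [RingHom.map_det_add_vecMulVec, RingHom.map_det_add_dotProduct_adjugate_mulVec, hA'] at this
  simpa [Function.comp_def] using this

end Matrix

theorem entrySum_eq_one_dotProduct_mulVec_one {m p : ℕ} (A : Matrix (Fin m) (Fin p) ℝ) :
    entrySum A = 1 ⬝ᵥ A *ᵥ 1 := by
  simp [entrySum, mulVec, dotProduct]

theorem entrySum_transpose {m p : ℕ} (A : Matrix (Fin m) (Fin p) ℝ) :
    entrySum Aᵀ = entrySum A :=
  Finset.sum_comm

theorem det_add_smul_allOnes (m : ℕ) (M : Matrix (Fin m) (Fin m) ℝ) (w : ℝ) :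
    (M + w • (Matrix.of fun _ _ => (1 : ℝ))).det = M.det + w * entrySum (cof M) := by
  have hJ : (w • of fun _ _ => 1 : Matrix (Fin m) (Fin m) ℝ) = vecMulVec (w • 1) 1 := by
    ext
    simp [vecMulVec_apply]
  rw [hJ, det_add_vecMulVec, cof, entrySum_transpose, entrySum_eq_one_dotProduct_mulVec_one,
    mulVec_smul, dotProduct_smul, smul_eq_mul]
end

section
/- For any square real matrix M, the map w ↦ S(co(M + w·U)) is constant in w; that is, S(co(M + w·U)) = S(co(M)) for all real w. -/
open Matrix

/-!
Summing the `j`-th column of the adjugate is Cramer's rule for the all-ones right-hand side, so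
`S(co M) = ∑ⱼ det Mⱼ`, where `Mⱼ` is `M` with row `j` replaced by ones. Adding `w • U` to `M`
adds `w` times the ones-row `j` to every other row of `Mⱼ`, which leaves `det Mⱼ` unchanged.
-/

namespace Matrix

variable {n R : Type*} [Fintype n] [DecidableEq n] [CommRing R]

theorem sum_adjugate_apply (A : Matrix n n R) (j : n) :
    ∑ i, adjugate A i j = det (A.updateRow j 1) := by
  rw [← cramer_transpose_apply, cramer_eq_adjugate_mulVec, ← adjugate_transpose]
  simp [mulVec, dotProduct]

theorem det_updateRow_add_replicateRow_smul (A : Matrix n n R) (j : n) (v : n → R) (w : R) :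
    det ((A + replicateRow n (w • v)).updateRow j v) = det (A.updateRow j v) := by
  refine det_eq_of_forall_row_eq_smul_add_const (fun i => if i = j then 0 else w) j (by simp) ?_
  intro i k
  rcases eq_or_ne i j with rfl | hij
  · simp
  · simp [hij]

end Matrix

theorem entrySum_cof_eq_sum_det_updateRow_one {m : ℕ} (A : Matrix (Fin m) (Fin m) ℝ) :
    entrySum (cof A) = ∑ j, det (A.updateRow j 1) := by
  simp only [entrySum, cof, transpose_apply, sum_adjugate_apply]

theorem entrySum_cof_add_smul_allOnes (m : ℕ) (M : Matrix (Fin m) (Fin m) ℝ) (w : ℝ) :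
    entrySum (cof (M + w • (Matrix.of fun _ _ => (1 : ℝ)))) = entrySum (cof M) := by
  have hU : w • (of fun _ _ => (1 : ℝ)) = replicateRow (Fin m) (w • (1 : Fin m → ℝ)) := by
    ext; simp
  simp only [hU, entrySum_cof_eq_sum_det_updateRow_one, det_updateRow_add_replicateRow_smul]
end

section
/- For any square real matrix M, the vector-valued maps w ↦ co(M + w·U)·𝟏 and w ↦ (co(M + w·U))ᵀ·𝟏 are constant in w, where 𝟏 is the all-ones column vector. -/
open Matrix

lemma det_updateRow_one_add_smul_allOnes (m : ℕ) (B : Matrix (Fin m) (Fin m) ℝ) (w : ℝ)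
    (i : Fin m) :
    ((B + w • (Matrix.of fun _ _ => (1 : ℝ))).updateRow i (fun _ => 1)).det
      = (B.updateRow i (fun _ => 1)).det := by
  apply Matrix.det_eq_of_forall_row_eq_smul_add_const (fun j => if j = i then 0 else w) i
    (by simp)
  intro r j
  by_cases hr : r = i <;> simp [hr, Matrix.updateRow_apply]

lemma cramer_transpose_key (m : ℕ) (B : Matrix (Fin m) (Fin m) ℝ) (w : ℝ) :
    Matrix.cramer (B + w • (Matrix.of fun _ _ => (1 : ℝ)))ᵀ (fun _ => 1)
      = Matrix.cramer Bᵀ (fun _ => 1) := by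
  funext i
  rw [Matrix.cramer_transpose_apply, Matrix.cramer_transpose_apply]
  exact det_updateRow_one_add_smul_allOnes m B w i

theorem cof_add_smul_allOnes_mulVec_one (m : ℕ) (M : Matrix (Fin m) (Fin m) ℝ) (w : ℝ) :
    (cof (M + w • (Matrix.of fun _ _ => (1 : ℝ)))).mulVec (fun _ => 1)
      = (cof M).mulVec (fun _ => 1) ∧
    (cof (M + w • (Matrix.of fun _ _ => (1 : ℝ))))ᵀ.mulVec (fun _ => 1)
      = (cof M)ᵀ.mulVec (fun _ => 1) := by
  have hU : (Matrix.of fun _ _ => (1 : ℝ) : Matrix (Fin m) (Fin m) ℝ)ᵀ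
      = Matrix.of fun _ _ => (1 : ℝ) := rfl
  constructor
  · -- cof X *ᵥ 1 = (adjugate X)ᵀ *ᵥ 1 = adjugate Xᵀ *ᵥ 1 = cramer Xᵀ 1
    simp only [cof, Matrix.adjugate_transpose, ← Matrix.cramer_eq_adjugate_mulVec]
    exact cramer_transpose_key m M w
  · simp only [cof, Matrix.transpose_transpose, ← Matrix.cramer_eq_adjugate_mulVec]
    have := cramer_transpose_key m Mᵀ w
    rwa [Matrix.transpose_transpose, Matrix.transpose_add, Matrix.transpose_smul, hU] at this
end

section
/- Let A, B be real m×m matrices and v ∈ ℝ such that det(A + v·B) = 0. Suppose there exist vectors x ∈ Ker((A + v·B)ᵀ) and y ∈ Ker(A + v·B) with xᵀ·B·y ≠ 0. Then rank(A + v·B) < max over w ∈ ℝ of rank(A + w·B). -/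
/-!
Write `M = A + v • B`. As `x` annihilates the range of `M` while `x ⬝ᵥ B *ᵥ y ≠ 0`, the vector
`B *ᵥ y` lies outside that range, so `(u, s) ↦ M u + s • B y` has rank `rank M + 1`. Rank is lower
semicontinuous, so `(u, s) ↦ (M + t • B) u + s • B y` still has rank `≥ rank M + 1` for small
`t ≠ 0`; since `M y = 0` we have `B y = (M + t • B) (t⁻¹ • y)`, so its range lies inside the range of
`M + t • B = A + (v + t) • B`.
-/

open Matrix Module LinearMap Filter Topology

namespace LinearMap

variable {𝕜 E F : Type*} [NontriviallyNormedField 𝕜] [CompleteSpace 𝕜]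
  [NormedAddCommGroup E] [NormedSpace 𝕜 E] [FiniteDimensional 𝕜 E]
  [NormedAddCommGroup F] [NormedSpace 𝕜 F]

theorem eventually_finrank_range_le_add_smul (f g : E →ₗ[𝕜] F) :
    ∀ᶠ t in 𝓝 (0 : 𝕜), finrank 𝕜 (range f) ≤ finrank 𝕜 (range (f + t • g)) := by
  have hcont : Continuous fun t : 𝕜 => toContinuousLinearMap (f + t • g) := by
    simp only [map_add, map_smul]
    fun_prop
  have hf : ↑(finrank 𝕜 (range f)) ≤
      (toContinuousLinearMap (f + (0 : 𝕜) • g) : E →ₗ[𝕜] F).rank := by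
    rw [coe_toContinuousLinearMap, zero_smul, add_zero, LinearMap.rank, finrank_eq_rank]
  filter_upwards [((isOpen_setOfPred_nat_le_rank _).preimage hcont).mem_nhds hf] with t ht
  rwa [Set.mem_preimage, Set.mem_ofPred_eq, coe_toContinuousLinearMap, LinearMap.rank,
    ← finrank_eq_rank, Nat.cast_le] at ht

theorem exists_finrank_range_lt_add_smul [FiniteDimensional 𝕜 F] (f g : E →ₗ[𝕜] F) {y : E}
    (hy : f y = 0) (hgy : g y ∉ range f) :
    ∃ t : 𝕜, finrank 𝕜 (range f) < finrank 𝕜 (range (f + t • g)) := by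
  let f' : E × 𝕜 →ₗ[𝕜] F := f.coprod (toSpanSingleton 𝕜 F (g y))
  have hf' : finrank 𝕜 (range f') = finrank 𝕜 (range f) + 1 := by
    rw [range_coprod, range_toSpanSingleton, Submodule.finrank_sup_span_singleton hgy]
  have hle : ∀ t ≠ (0 : 𝕜), range (f' + t • g.comp (fst 𝕜 E 𝕜)) ≤ range (f + t • g) := by
    rintro t ht _ ⟨⟨u, s⟩, rfl⟩
    refine ⟨u + (s / t) • y, ?_⟩
    simp only [f', add_apply, coprod_apply, toSpanSingleton_apply, smul_apply, comp_apply,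
      fst_apply, map_add, map_smul, hy]
    rw [zero_add, smul_smul, div_mul_cancel₀ s ht]
    abel
  have hnear : ∀ᶠ t in 𝓝[≠] (0 : 𝕜), finrank 𝕜 (range f') ≤
      finrank 𝕜 (range (f' + t • g.comp (fst 𝕜 E 𝕜))) :=
    nhdsWithin_le_nhds (eventually_finrank_range_le_add_smul _ _)
  obtain ⟨t, hrank, ht⟩ := (hnear.and self_mem_nhdsWithin).exists
  have hmono := Submodule.finrank_mono (hle t ht)
  exact ⟨t, by omega⟩

end LinearMap

theorem rank_drop_general (m : ℕ) (A B : Matrix (Fin m) (Fin m) ℝ) (v : ℝ)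
    (x y : Fin m → ℝ)
    (hx : (A + v • B)ᵀ.mulVec x = 0)
    (hy : (A + v • B).mulVec y = 0)
    (hxy : x ⬝ᵥ B.mulVec y ≠ 0) :
    ∃ w : ℝ, (A + v • B).rank < (A + w • B).rank := by
  have hBy : toLin' B y ∉ range (toLin' (A + v • B)) := by
    rintro ⟨z, hz⟩
    rw [toLin'_apply, toLin'_apply] at hz
    rw [← hz, dotProduct_mulVec, ← mulVec_transpose, hx, zero_dotProduct] at hxy
    exact hxy rfl
  obtain ⟨t, ht⟩ := exists_finrank_range_lt_add_smul (toLin' (A + v • B)) (toLin' B) hy hBy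
  have hpencil : toLin' (A + (v + t) • B) = toLin' (A + v • B) + t • toLin' B := by
    rw [add_smul, ← add_assoc, map_add, map_smul]
  refine ⟨v + t, ?_⟩
  rwa [Matrix.rank, Matrix.rank, ← toLin'_apply', ← toLin'_apply', hpencil]

theorem rank_drop (m : ℕ) (A B : Matrix (Fin m) (Fin m) ℝ) (v : ℝ)
    (hdet : (A + v • B).det = 0)
    (x y : Fin m → ℝ)
    (hx : (A + v • B)ᵀ.mulVec x = 0)
    (hy : (A + v • B).mulVec y = 0)
    (hxy : x ⬝ᵥ B.mulVec y ≠ 0) :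
    ∃ w : ℝ, (A + v • B).rank < (A + w • B).rank :=
  rank_drop_general m A B v x y hx hy hxy
end

section
/- Let A and B be real square matrices of the same size. The one-variable polynomial P(w) = det(A + w·B) is either identically zero, or its degree is at most rank(B). -/
open Matrix Polynomial Finset

-- key lemma: mixed matrix has det 0 when too many B-columns
theorem aux_det_mixed_zero (m : ℕ) (A B : Matrix (Fin m) (Fin m) ℝ)
    (S : Finset (Fin m)) (hS : B.rank < S.card) :
    (Matrix.of fun i j => if j ∈ S then B i j else A i j).det = 0 := by
  classical
  rw [← Matrix.exists_mulVec_eq_zero_iff]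
  have hnli : ¬ LinearIndependent ℝ (fun j : {x // x ∈ S} => Bᵀ j.1) := by
    intro h
    have h1 := linearIndependent_iff_card_le_finrank_span.mp h
    have hsub : Set.range (fun j : {x // x ∈ S} => Bᵀ j.1) ⊆ Set.range Bᵀ := by
      rintro _ ⟨j, rfl⟩; exact ⟨j.1, rfl⟩
    have h2 : Set.finrank ℝ (Set.range fun j : {x // x ∈ S} => Bᵀ j.1)
        ≤ Set.finrank ℝ (Set.range Bᵀ) :=
      Submodule.finrank_mono (Submodule.span_mono hsub)
    have h3 : B.rank = Set.finrank ℝ (Set.range Bᵀ) := B.rank_eq_finrank_span_cols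
    have := h1.trans h2
    rw [← h3, Fintype.card_coe] at this
    omega
  obtain ⟨g, hg, j0, hj0⟩ := Fintype.not_linearIndependent_iff.mp hnli
  set v : Fin m → ℝ := fun j => if h : j ∈ S then g ⟨j, h⟩ else 0 with hv
  have hgv : ∀ j : {x // x ∈ S}, v j.1 = g j := by
    rintro ⟨j, hj⟩; exact dif_pos hj
  refine ⟨v, ?_, ?_⟩
  · intro h0
    apply hj0
    have := congrFun h0 j0.1
    rwa [hgv j0] at this
  · have hg' : ∑ j ∈ S, v j • Bᵀ j = 0 := by
      rw [← Finset.sum_coe_sort S (fun j => v j • Bᵀ j)]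
      rw [← hg]
      exact Finset.sum_congr rfl fun j _ => by rw [hgv j]
    funext i
    have hgi : ∑ j ∈ S, v j * B i j = 0 := by
      have := congrFun hg' i
      simpa [Finset.sum_apply, transpose_apply] using this
    have : ∑ j, (if j ∈ S then B i j else A i j) * v j = ∑ j ∈ S, B i j * v j := by
      rw [← Finset.sum_subset (Finset.subset_univ S) (fun j _ hj => by simp [hv, hj])]
      exact Finset.sum_congr rfl fun j hj => by simp [hj]
    simp only [mulVec, dotProduct, Matrix.of_apply, Pi.zero_apply]
    rw [this, ← hgi]
    exact Finset.sum_congr rfl fun j _ => mul_comm _ _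

theorem det_pencil_degree_le_rank (m : ℕ) (A B : Matrix (Fin m) (Fin m) ℝ)
    (P : Polynomial ℝ) (hP : ∀ w : ℝ, P.eval w = (A + w • B).det) :
    P = 0 ∨ P.natDegree ≤ B.rank := by
  classical
  right
  set M : Matrix (Fin m) (Fin m) ℝ[X] :=
    Matrix.of fun i j => C (A i j) + C (B i j) * X with hM
  have hPQ : P = M.det := by
    apply Polynomial.funext
    intro w
    rw [hP]
    have hmap : M.map (evalRingHom w) = A + w • B := by
      ext i j
      simp only [hM, Matrix.map_apply, Matrix.of_apply, Polynomial.coe_evalRingHom,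
        eval_add, eval_mul, eval_C, eval_X, Matrix.add_apply, Matrix.smul_apply, smul_eq_mul]
      ring
    rw [show M.det.eval w = (evalRingHom w) M.det from rfl, RingHom.map_det, RingHom.mapMatrix_apply, hmap]
  have hexp : M.det = ∑ S ∈ (Finset.univ : Finset (Fin m)).powerset,
      C ((Matrix.of fun i j => if j ∈ S then B i j else A i j).det) * X ^ S.card := by
    rw [Matrix.det_apply]
    have step1 : ∀ σ : Equiv.Perm (Fin m),
        Equiv.Perm.sign σ • ∏ i, M (σ i) i
        = ∑ S ∈ (Finset.univ : Finset (Fin m)).powerset,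
          Equiv.Perm.sign σ •
            (C ((∏ i ∈ S, B (σ i) i) * ∏ i ∈ univ \ S, A (σ i) i) * X ^ S.card) := by
      intro σ
      rw [show (∏ i, M (σ i) i) = ∏ i, (C (B (σ i) i) * X + C (A (σ i) i)) from
        Finset.prod_congr rfl fun i _ => by simp [hM, add_comm], Finset.prod_add,
        Finset.smul_sum]
      refine Finset.sum_congr rfl fun S hS => ?_
      congr 1
      rw [Finset.prod_mul_distrib, Finset.prod_const, ← map_prod, ← map_prod,
        mul_right_comm, ← _root_.map_mul]
    rw [Finset.sum_congr rfl fun σ _ => step1 σ, Finset.sum_comm]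
    refine Finset.sum_congr rfl fun S hS => ?_
    rw [Matrix.det_apply, map_sum, Finset.sum_mul]
    refine Finset.sum_congr rfl fun σ _ => ?_
    have : (∏ i, (Matrix.of fun i j => if j ∈ S then B i j else A i j) (σ i) i)
        = (∏ i ∈ S, B (σ i) i) * ∏ i ∈ univ \ S, A (σ i) i := by
      rw [← Finset.prod_sdiff (Finset.subset_univ S), mul_comm]
      congr 1
      · exact Finset.prod_congr rfl fun i hi => by simp [hi]
      · exact Finset.prod_congr rfl fun i hi => by
          simp [(Finset.mem_sdiff.mp hi).2]
    rw [this]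
    simp only [Units.smul_def, zsmul_eq_mul, _root_.map_mul, map_intCast]
    ring
  rw [hPQ]
  refine natDegree_le_iff_coeff_eq_zero.mpr fun N hN => ?_
  rw [hexp, finset_sum_coeff]
  refine Finset.sum_eq_zero fun S hS => ?_
  rw [coeff_C_mul, coeff_X_pow]
  by_cases h : S.card = N
  · rw [if_pos h.symm, mul_one, aux_det_mixed_zero m A B S (h ▸ hN)]
  · rw [if_neg (fun h' => h h'.symm), mul_zero]
end

section
/- Let Ġ be a Shapley–Snow kernel of a matrix game G with value v and basic solution restricted strategies (ẋ, ẏ) satisfying ẋᵀĠ = v·𝟏ᵀ, Ġẏ = v·𝟏, ẋ, ẏ strictly positive probability vectors, and S(co(Ġ − v·U̇)) ≠ 0. Then Ker(Ġ − v·U̇) = span{ẏ} and Ker((Ġ − v·U̇)ᵀ) = span{ẋ}. -/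
open Matrix

/-- If `M` is singular but has a nonzero adjugate (i.e. a nonzero `(n-1)`-minor),
then its kernel is spanned by any nonzero kernel vector. -/
lemma ker_eq_span_of_adjugate_ne_zero {n : ℕ} (M : Matrix (Fin (n + 1)) (Fin (n + 1)) ℝ)
    (hadj : M.adjugate ≠ 0) (w : Fin (n + 1) → ℝ) (hw : M.mulVec w = 0) (hw0 : w ≠ 0) :
    LinearMap.ker M.mulVecLin = Submodule.span ℝ {w} := by
  -- find a nonzero minor
  obtain ⟨i, j, hij⟩ : ∃ i j, M.adjugate i j ≠ 0 := by
    by_contra h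
    push_neg at h
    exact hadj (by ext i j; simpa using h i j)
  rw [Matrix.adjugate_fin_succ_eq_det_submatrix] at hij
  have hminor : (M.submatrix j.succAbove i.succAbove).det ≠ 0 := by
    intro h; rw [h, mul_zero] at hij; exact hij rfl
  -- rank M ≥ n
  have hrank : n ≤ M.rank := by
    have hli : LinearIndependent ℝ (fun k => M.submatrix j.succAbove i.succAbove k) :=
      Matrix.linearIndependent_rows_iff_isUnit.mpr
        ((Matrix.isUnit_iff_isUnit_det _).mpr (isUnit_iff_ne_zero.mpr hminor))
    have hli' : LinearIndependent ℝ (fun k => M (j.succAbove k)) := by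
      have : LinearIndependent ℝ
          (fun k => (LinearMap.funLeft ℝ ℝ i.succAbove) (M (j.succAbove k))) := hli
      exact this.of_comp _
    have h1 : Submodule.span ℝ (Set.range fun k => M (j.succAbove k))
        ≤ Submodule.span ℝ (Set.range M) := by
      apply Submodule.span_mono
      rintro _ ⟨k, rfl⟩; exact ⟨j.succAbove k, rfl⟩
    calc n = Module.finrank ℝ (Submodule.span ℝ (Set.range fun k => M (j.succAbove k))) := by
            rw [finrank_span_eq_card hli', Fintype.card_fin]
      _ ≤ Module.finrank ℝ (Submodule.span ℝ (Set.range M)) := Submodule.finrank_mono h1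
      _ = M.rank := (Matrix.rank_eq_finrank_span_row M).symm
  -- w is in the kernel
  have hwker : w ∈ LinearMap.ker M.mulVecLin := by
    simpa [Matrix.mulVecLin] using hw
  -- rank-nullity: finrank of kernel is 1
  have hrn := LinearMap.finrank_range_add_finrank_ker M.mulVecLin
  rw [Module.finrank_fintype_fun_eq_card, Fintype.card_fin] at hrn
  have hker1 : Module.finrank ℝ (LinearMap.ker M.mulVecLin) ≤ 1 := by
    have : M.rank = Module.finrank ℝ (LinearMap.range M.mulVecLin) := rfl
    omega
  -- conclude
  have hle : Submodule.span ℝ {w} ≤ LinearMap.ker M.mulVecLin := by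
    rw [Submodule.span_singleton_le_iff_mem]; exact hwker
  refine (Submodule.eq_of_le_of_finrank_le hle ?_).symm
  rw [finrank_span_singleton hw0]
  exact hker1

theorem ker_sub_value_allOnes (b : ℕ) (G : Matrix (Fin b) (Fin b) ℝ) (v : ℝ)
    (x y : Fin b → ℝ)
    (hxpos : ∀ i, 0 < x i) (hxsum : ∑ i, x i = 1)
    (hypos : ∀ j, 0 < y j) (hysum : ∑ j, y j = 1)
    (hxG : Matrix.vecMul x G = fun _ => v)
    (hGy : G.mulVec y = fun _ => v)
    (hdet : (G - v • (Matrix.of fun _ _ => (1 : ℝ))).det = 0)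
    (hco : cof (G - v • (Matrix.of fun _ _ => (1 : ℝ))) ≠ 0) :
    LinearMap.ker (G - v • (Matrix.of fun _ _ => (1 : ℝ))).mulVecLin
        = Submodule.span ℝ {y} ∧
    LinearMap.ker (G - v • (Matrix.of fun _ _ => (1 : ℝ)))ᵀ.mulVecLin
        = Submodule.span ℝ {x} := by
  obtain _ | n := b
  · simp at hxsum
  set M := G - v • (Matrix.of fun _ _ => (1 : ℝ)) with hM
  have hadj : M.adjugate ≠ 0 := fun h => hco (by simp [cof, h])
  have hadjT : (Mᵀ).adjugate ≠ 0 := by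
    rw [← Matrix.adjugate_transpose]
    intro h
    exact hadj (by simpa using congrArg Matrix.transpose h)
  have hUy : ((Matrix.of fun _ _ => (1 : ℝ)) : Matrix (Fin (n+1)) (Fin (n+1)) ℝ).mulVec y = fun _ => 1 := by
    ext i; simp [Matrix.mulVec, dotProduct, hysum]
  have hMy : M.mulVec y = 0 := by
    rw [hM, Matrix.sub_mulVec, Matrix.smul_mulVec, hGy, hUy]
    ext i; simp
  have hUx : Matrix.vecMul x ((Matrix.of fun _ _ => (1 : ℝ)) : Matrix (Fin (n+1)) (Fin (n+1)) ℝ) = fun _ => 1 := by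
    ext i; simp [Matrix.vecMul, dotProduct, hxsum]
  have hMx : Mᵀ.mulVec x = 0 := by
    ext i
    have h1 : (x ᵥ* G) i = v := congrFun hxG i
    simp only [Matrix.vecMul, dotProduct] at h1
    simp only [Matrix.mulVec, dotProduct, Matrix.sub_apply, Matrix.transpose_apply,
      Matrix.of_apply, Pi.smul_apply, smul_eq_mul, mul_one, sub_mul, Finset.sum_sub_distrib,
      Pi.zero_apply, hM]
    rw [Finset.sum_congr rfl (fun k _ => mul_comm (G k i) (x k)), h1]
    simp only [Matrix.smul_apply, Matrix.of_apply, smul_eq_mul, mul_one]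
    rw [← Finset.mul_sum, hxsum, mul_one, sub_self]
  have hy0 : y ≠ 0 := fun h => by simpa [h] using (hypos 0).ne'
  have hx0 : x ≠ 0 := fun h => by simpa [h] using (hxpos 0).ne'
  exact ⟨ker_eq_span_of_adjugate_ne_zero M hadj y hMy hy0,
    ker_eq_span_of_adjugate_ne_zero Mᵀ hadjT x hMx hx0⟩
end
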